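/- (Theorem 2, per-output channel) Consider a MIMO LTI system whose i-th output satisfies y_i(t) = −∑_{j=1}^{ñ_i} a_{i,j} y_i(t−j) + ∑_{j=1}^{ñ_i} b_{i,j} u(t−j) with b_{i,j} ∈ ℝ^{1×m}, where the polynomials for each input channel share no common divisor with the denominator, and ñ_i ≤ n̄. If the offline input u_d ∈ ℝ^m is persistently exciting of order 2n̄ + 1 with T ≥ 4n̄+1 data points, then with χ̄_i(t) = col(y_i(t−n̄),…,y_i(t−1), u(t−n̄),…,u(t−1)) ∈ ℝ^{(1+m)n̄} and data matrices X̄_{i,−}, X̄_{i,+}, U₋ built from the offline data, the online trajectory satisfies χ̄_i(t+1) = X̄_{i,+} [X̄_{i,−}; U₋]† col(χ̄_i(t), u(t)) and y_i(t) = e_{n̄}ᵀ χ̄_i(t+1). -/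
import Mathlib


open Matrix

open Polynomial

/-- Per-channel extended state
`χ̄_i(t) = col(y_i(t−n̄),…,y_i(t−1), u(t−n̄),…,u(t−1)) ∈ ℝ^{(1+m)n̄}`. -/
def chiM (nb : ℕ) {m : ℕ} (u : ℤ → Fin m → ℝ) (y : ℤ → ℝ) (t : ℤ) :
    (Fin nb ⊕ Fin nb × Fin m) → ℝ :=
  fun i =>
    match i with
    | Sum.inl k => y (t - (nb : ℤ) + (k.1 : ℤ))
    | Sum.inr (k, r) => u (t - (nb : ℤ) + (k.1 : ℤ)) r

/-- Block Hankel matrix of an `ℝ^m`-valued ℤ-signal, `L` block rows, `N` columns,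
window starting at `t0`. -/
def HankelM {m : ℕ} (u : ℤ → Fin m → ℝ) (t0 : ℤ) (L N : ℕ) :
    Matrix (Fin L × Fin m) (Fin N) ℝ :=
  Matrix.of fun p j => u (t0 + (p.1.1 : ℤ) + (j.1 : ℤ)) p.2

/-- The stacked data matrix `J = col(X̄_{i,−}, U₋)`. -/
def JmatM (nb T : ℕ) {m : ℕ} (ud : ℤ → Fin m → ℝ) (yd : ℤ → ℝ) :
    Matrix ((Fin nb ⊕ Fin nb × Fin m) ⊕ Fin m) (Fin T) ℝ :=
  Matrix.of fun i j =>
    match i with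
    | Sum.inl i => chiM nb ud yd (j.1 : ℤ) i
    | Sum.inr r => ud (j.1 : ℤ) r

/-- The shifted data matrix `X̄_{i,+} = [χ̄_{d,i}(1),…,χ̄_{d,i}(T)]`. -/
def XplusM (nb T : ℕ) {m : ℕ} (ud : ℤ → Fin m → ℝ) (yd : ℤ → ℝ) :
    Matrix (Fin nb ⊕ Fin nb × Fin m) (Fin T) ℝ :=
  Matrix.of fun i j => chiM nb ud yd ((j.1 : ℤ) + 1) i

/-- `Jd` is the Moore-Penrose pseudoinverse of `J` (four Penrose conditions). -/
def IsMoorePenrose {ι κ : Type*} [Fintype ι] [Fintype κ] [DecidableEq ι] [DecidableEq κ]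
    (J : Matrix ι κ ℝ) (Jd : Matrix κ ι ℝ) : Prop :=
  J * Jd * J = J ∧ Jd * J * Jd = Jd ∧ (J * Jd)ᵀ = J * Jd ∧ (Jd * J)ᵀ = Jd * J

noncomputable section DPC

/-- forward shift on ℤ-signals -/
def shiftE : Module.End ℝ (ℤ → ℝ) :=
  { toFun := fun s t => s (t + 1)
    map_add' := fun _ _ => rfl
    map_smul' := fun _ _ => rfl }

/-- apply a polynomial in the shift to a signal -/
def papply (f : Polynomial ℝ) (s : ℤ → ℝ) : ℤ → ℝ := Polynomial.aeval shiftE f s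

lemma shiftE_pow_apply (k : ℕ) : ∀ (s : ℤ → ℝ) (t : ℤ), (shiftE ^ k) s t = s (t + k) := by
  induction k with
  | zero => intro s t; simp
  | succ k ih =>
    intro s t
    rw [pow_succ, Module.End.mul_apply, ih]
    show s (t + k + 1) = _
    congr 1
    push_cast
    ring

lemma papply_X_pow (k : ℕ) (s : ℤ → ℝ) (t : ℤ) : papply (X ^ k) s t = s (t + k) := by
  rw [papply, map_pow, aeval_X, shiftE_pow_apply]

lemma papply_C_mul_X_pow (c : ℝ) (k : ℕ) (s : ℤ → ℝ) (t : ℤ) :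
    papply (C c * X ^ k) s t = c * s (t + k) := by
  rw [papply, _root_.map_mul, aeval_C, Module.End.mul_apply, Module.algebraMap_end_apply]
  show (c • ((Polynomial.aeval shiftE (X ^ k)) s)) t = _
  rw [Pi.smul_apply, ← papply, papply_X_pow, smul_eq_mul]

lemma papply_add (f g : Polynomial ℝ) (s : ℤ → ℝ) (t : ℤ) :
    papply (f + g) s t = papply f s t + papply g s t := by
  simp [papply, map_add, LinearMap.add_apply]

lemma papply_sum {ι : Type*} (A : Finset ι) (f : ι → Polynomial ℝ) (s : ℤ → ℝ) (t : ℤ) :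
    papply (∑ i ∈ A, f i) s t = ∑ i ∈ A, papply (f i) s t := by
  simp only [papply, map_sum]
  rw [LinearMap.coe_sum, Finset.sum_apply, Finset.sum_apply]

lemma papply_mul (f g : Polynomial ℝ) (s : ℤ → ℝ) :
    papply (f * g) s = papply f (papply g s) := by
  simp [papply, _root_.map_mul, Module.End.mul_apply]

lemma papply_neg (f : Polynomial ℝ) (s : ℤ → ℝ) (t : ℤ) :
    papply (-f) s t = -papply f s t := by
  simp [papply, map_neg, LinearMap.neg_apply]

lemma papply_sub_sig (f : Polynomial ℝ) (s₁ s₂ : ℤ → ℝ) :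
    papply f (s₁ - s₂) = papply f s₁ - papply f s₂ := map_sub _ _ _

lemma papply_add_sig (f : Polynomial ℝ) (s₁ s₂ : ℤ → ℝ) :
    papply f (s₁ + s₂) = papply f s₁ + papply f s₂ := map_add _ _ _

lemma papply_sum_sig {ι : Type*} (A : Finset ι) (f : Polynomial ℝ) (s : ι → ℤ → ℝ) :
    papply f (∑ i ∈ A, s i) = ∑ i ∈ A, papply f (s i) := map_sum _ _ _

lemma papply_zero_sig (f : Polynomial ℝ) : papply f (0 : ℤ → ℝ) = 0 := map_zero _

lemma papply_coeff_sum {f : Polynomial ℝ} {D : ℕ} (hf : f.natDegree < D) (s : ℤ → ℝ) (t : ℤ) :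
    papply f s t = ∑ k ∈ Finset.range D, f.coeff k * s (t + k) := by
  rw [papply, Polynomial.aeval_eq_sum_range' hf]
  rw [LinearMap.coe_sum, Finset.sum_apply, Finset.sum_apply]
  refine Finset.sum_congr rfl fun k _ => ?_
  rw [LinearMap.smul_apply, Pi.smul_apply, shiftE_pow_apply, smul_eq_mul]

end DPC
noncomputable section DPC2
open Polynomial Matrix

def Apol (n : ℕ) (a : Fin n → ℝ) : Polynomial ℝ :=
  (X : Polynomial ℝ) ^ n + ∑ j : Fin n, C (a j) * X ^ (n - 1 - j.1)

def Bpol (n : ℕ) {m : ℕ} (b : Fin n → Fin m → ℝ) (r : Fin m) : Polynomial ℝ :=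
  ∑ j : Fin n, C (b j r) * X ^ (n - 1 - j.1)

lemma Apol_monic (n : ℕ) (hn : 1 ≤ n) (a : Fin n → ℝ) : (Apol n a).Monic := by
  have h : ((∑ j : Fin n, C (a j) * X ^ (n - 1 - j.1) : Polynomial ℝ)).degree < (n : ℕ) := by
    refine lt_of_le_of_lt (Polynomial.degree_sum_le _ _) ?_
    rw [Finset.sup_lt_iff (by exact_mod_cast WithBot.bot_lt_coe n)]
    intro j _
    refine lt_of_le_of_lt (Polynomial.degree_mul_le _ _) ?_
    refine lt_of_le_of_lt (add_le_add (Polynomial.degree_C_le) (Polynomial.degree_X_pow_le _)) ?_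
    have hlt : (n - 1 - j.1 : ℕ) < n := by have := j.2; omega
    calc (0 : WithBot ℕ) + ((n - 1 - j.1 : ℕ) : WithBot ℕ) = ((n - 1 - j.1 : ℕ) : WithBot ℕ) := by
          rw [zero_add]
    _ < ((n : ℕ) : WithBot ℕ) := by exact_mod_cast hlt
  simpa [Apol] using Polynomial.monic_X_pow_add h
lemma Apol_ne_zero (n : ℕ) (hn : 1 ≤ n) (a : Fin n → ℝ) : Apol n a ≠ 0 :=
  (Apol_monic n hn a).ne_zero

lemma Apol_natDegree_le (n : ℕ) (a : Fin n → ℝ) : (Apol n a).natDegree ≤ n := by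
  refine le_trans (Polynomial.natDegree_add_le _ _) ?_
  simp only [Polynomial.natDegree_X_pow, max_le_iff, le_refl, true_and]
  refine le_trans (Polynomial.natDegree_sum_le _ _) ?_
  rw [Finset.fold_max_le]
  refine ⟨by omega, fun j _ => le_trans (Polynomial.natDegree_C_mul_le _ _)
    (by rw [Polynomial.natDegree_X_pow]; omega)⟩

lemma Bpol_natDegree_le (n : ℕ) {m : ℕ} (b : Fin n → Fin m → ℝ) (r : Fin m) :
    (Bpol n b r).natDegree ≤ n := by
  refine le_trans (Polynomial.natDegree_sum_le _ _) ?_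
  rw [Finset.fold_max_le]
  refine ⟨by omega, fun j _ => le_trans (Polynomial.natDegree_C_mul_le _ _)
    (by rw [Polynomial.natDegree_X_pow]; omega)⟩

lemma papply_Apol (n : ℕ) (a : Fin n → ℝ) (s : ℤ → ℝ) (t : ℤ) :
    papply (Apol n a) s t = s (t + n) + ∑ j : Fin n, a j * s (t + n - 1 - j.1) := by
  have key : ∀ (j : Fin n), (t : ℤ) + ((n - 1 - j.1 : ℕ) : ℤ) = t + n - 1 - j.1 := by
    intro j; have := j.2; omega
  rw [Apol, papply_add, papply_X_pow, papply_sum]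
  congr 1
  refine Finset.sum_congr rfl fun j _ => ?_
  rw [papply_C_mul_X_pow, key]

lemma papply_Bpol (n : ℕ) {m : ℕ} (b : Fin n → Fin m → ℝ) (r : Fin m) (s : ℤ → ℝ) (t : ℤ) :
    papply (Bpol n b r) s t = ∑ j : Fin n, b j r * s (t + n - 1 - j.1) := by
  have key : ∀ (j : Fin n), (t : ℤ) + ((n - 1 - j.1 : ℕ) : ℤ) = t + n - 1 - j.1 := by
    intro j; have := j.2; omega
  rw [Bpol, papply_sum]
  refine Finset.sum_congr rfl fun j _ => ?_
  rw [papply_C_mul_X_pow, key]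

lemma arx_poly (n : ℕ) {m : ℕ} (hn : 1 ≤ n) (a : Fin n → ℝ) (b : Fin n → Fin m → ℝ)
    (u : ℤ → Fin m → ℝ) (y : ℤ → ℝ)
    (hARX : ∀ t : ℤ, y t = -∑ j : Fin n, a j * y (t - 1 - (j.1 : ℤ))
      + ∑ j : Fin n, b j ⬝ᵥ u (t - 1 - (j.1 : ℤ))) (t : ℤ) :
    papply (Apol n a) y t = ∑ r : Fin m, papply (Bpol n b r) (fun τ => u τ r) t := by
  rw [papply_Apol]
  have := hARX (t + n)
  rw [this]
  simp only [papply_Bpol, dotProduct]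
  rw [Finset.sum_comm]
  ring

end DPC2
noncomputable section DPC3
open Polynomial

lemma Apol_dvd_of_dvd_mul (n : ℕ) {m : ℕ} (hn : 1 ≤ n) (a : Fin n → ℝ) (b : Fin n → Fin m → ℝ)
    (hcop : ∀ d : Polynomial ℝ, d ∣ Apol n a → (∀ r : Fin m, d ∣ Bpol n b r) → IsUnit d)
    (p : Polynomial ℝ) (hd : ∀ r, Apol n a ∣ p * Bpol n b r) : Apol n a ∣ p := by
  by_cases hp : p = 0
  · simp [hp]
  set A := Apol n a with hA
  set d := GCDMonoid.gcd A p with hdd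
  have hA0 : A ≠ 0 := Apol_ne_zero n hn a
  have hd0 : d ≠ 0 := gcd_ne_zero_of_left hA0
  have hAd : d * (A / d) = A := EuclideanDomain.mul_div_cancel' hd0 (gcd_dvd_left A p)
  have hpd : d * (p / d) = p := EuclideanDomain.mul_div_cancel' hd0 (gcd_dvd_right A p)
  have hco : IsCoprime (A / d) (p / d) := isCoprime_div_gcd_div_gcd hp
  have hAr : ∀ r, (A / d) ∣ Bpol n b r := by
    intro r
    obtain ⟨c, hc⟩ := hd r
    have h1 : d * ((A / d) * c) = d * ((p / d) * Bpol n b r) := by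
      rw [← mul_assoc, hAd, ← hc, ← mul_assoc, hpd]
    have h2 : (p / d) * Bpol n b r = (A / d) * c := (mul_left_cancel₀ hd0 h1).symm
    exact hco.dvd_of_dvd_mul_left ⟨c, h2⟩
  have hunit : IsUnit (A / d) := hcop (A / d) ⟨d, by rw [mul_comm, hAd]⟩ hAr
  obtain ⟨v, hv⟩ := hunit
  have hAdvd : A ∣ d := ⟨(↑v⁻¹ : Polynomial ℝ), by
    rw [← hAd, ← hv, mul_assoc, Units.mul_inv, mul_one]⟩
  exact hAdvd.trans (gcd_dvd_right A p)
end DPC3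
noncomputable section DPC4
open Polynomial Matrix

def pxi (nb : ℕ) {m : ℕ} (ξ : ((Fin nb ⊕ Fin nb × Fin m) ⊕ Fin m) → ℝ) : Polynomial ℝ :=
  ∑ k : Fin nb, C (ξ (Sum.inl (Sum.inl k))) * X ^ (k.1 : ℕ)

def qxi (nb : ℕ) {m : ℕ} (ξ : ((Fin nb ⊕ Fin nb × Fin m) ⊕ Fin m) → ℝ) (r : Fin m) :
    Polynomial ℝ :=
  (∑ k : Fin nb, C (ξ (Sum.inl (Sum.inr (k, r)))) * X ^ (k.1 : ℕ)) + C (ξ (Sum.inr r)) * X ^ nb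

lemma pxi_natDegree_le (nb : ℕ) {m : ℕ} (ξ : ((Fin nb ⊕ Fin nb × Fin m) ⊕ Fin m) → ℝ) :
    (pxi nb ξ).natDegree ≤ nb := by
  refine le_trans (Polynomial.natDegree_sum_le _ _) ?_
  rw [Finset.fold_max_le]
  refine ⟨by omega, fun k _ => le_trans (Polynomial.natDegree_C_mul_le _ _)
    (by rw [Polynomial.natDegree_X_pow]; exact k.2.le)⟩

lemma qxi_natDegree_le (nb : ℕ) {m : ℕ} (ξ : ((Fin nb ⊕ Fin nb × Fin m) ⊕ Fin m) → ℝ)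
    (r : Fin m) : (qxi nb ξ r).natDegree ≤ nb := by
  refine le_trans (Polynomial.natDegree_add_le _ _) ?_
  rw [max_le_iff]
  constructor
  · refine le_trans (Polynomial.natDegree_sum_le _ _) ?_
    rw [Finset.fold_max_le]
    refine ⟨by omega, fun k _ => le_trans (Polynomial.natDegree_C_mul_le _ _)
      (by rw [Polynomial.natDegree_X_pow]; exact k.2.le)⟩
  · exact le_trans (Polynomial.natDegree_C_mul_le _ _) (by rw [Polynomial.natDegree_X_pow])

lemma sum_elim_eval (nb : ℕ) {m : ℕ} (ξ : ((Fin nb ⊕ Fin nb × Fin m) ⊕ Fin m) → ℝ)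
    (u : ℤ → Fin m → ℝ) (y : ℤ → ℝ) (t : ℤ) :
    ∑ c, Sum.elim (chiM nb u y t) (u t) c * ξ c
      = papply (pxi nb ξ) y (t - nb)
        + ∑ r, papply (qxi nb ξ r) (fun τ => u τ r) (t - nb) := by
  have hp : papply (pxi nb ξ) y (t - nb)
      = ∑ k : Fin nb, ξ (Sum.inl (Sum.inl k)) * y (t - nb + k.1) := by
    rw [pxi, papply_sum]
    exact Finset.sum_congr rfl fun k _ => by rw [papply_C_mul_X_pow]
  have hq : ∀ r, papply (qxi nb ξ r) (fun τ => u τ r) (t - nb)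
      = (∑ k : Fin nb, ξ (Sum.inl (Sum.inr (k, r))) * u (t - nb + k.1) r)
        + ξ (Sum.inr r) * u t r := by
    intro r
    rw [qxi, papply_add, papply_sum, papply_C_mul_X_pow]
    congr 1
    · exact Finset.sum_congr rfl fun k _ => by rw [papply_C_mul_X_pow]
    · congr 2
      ring
  have hqs : ∑ r, papply (qxi nb ξ r) (fun τ => u τ r) (t - nb)
      = (∑ r, ∑ k : Fin nb, ξ (Sum.inl (Sum.inr (k, r))) * u (t - nb + k.1) r)
        + ∑ r, ξ (Sum.inr r) * u t r := by
    simp only [hq]; rw [Finset.sum_add_distrib]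
  rw [hp, hqs, Fintype.sum_sum_type, Fintype.sum_sum_type, Fintype.sum_prod_type]
  simp only [Sum.elim_inl, Sum.elim_inr]
  have e1 : (∑ k : Fin nb, chiM nb u y t (Sum.inl k) * ξ (Sum.inl (Sum.inl k)))
      = ∑ k : Fin nb, ξ (Sum.inl (Sum.inl k)) * y (t - nb + k.1) :=
    Finset.sum_congr rfl fun k _ => by
      show y (t - nb + k.1) * _ = _; ring
  have e2 : (∑ k : Fin nb, ∑ r, chiM nb u y t (Sum.inr (k, r)) * ξ (Sum.inl (Sum.inr (k, r))))
      = ∑ r, ∑ k : Fin nb, ξ (Sum.inl (Sum.inr (k, r))) * u (t - nb + k.1) r := by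
    rw [Finset.sum_comm]
    exact Finset.sum_congr rfl fun r _ => Finset.sum_congr rfl fun k _ => by
      show u (t - nb + k.1) r * _ = _; ring
  have e3 : (∑ r, u t r * ξ (Sum.inr r)) = ∑ r, ξ (Sum.inr r) * u t r :=
    Finset.sum_congr rfl fun r _ => mul_comm _ _
  rw [e1, e2, e3, add_assoc]
end DPC4
noncomputable section DPC5
open Polynomial Matrix

lemma keyB (n nb T m : ℕ) (hn : 1 ≤ n) (hnb : n ≤ nb) (hT : 4 * nb + 1 ≤ T)
    (a : Fin n → ℝ) (b : Fin n → Fin m → ℝ)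
    (hcop : ∀ d : Polynomial ℝ, d ∣ Apol n a → (∀ r : Fin m, d ∣ Bpol n b r) → IsUnit d)
    (ud : ℤ → Fin m → ℝ) (yd : ℤ → ℝ)
    (hARXd : ∀ t : ℤ, yd t = -∑ j : Fin n, a j * yd (t - 1 - (j.1 : ℤ))
      + ∑ j : Fin n, b j ⬝ᵥ ud (t - 1 - (j.1 : ℤ)))
    (hPE : (HankelM ud (-(nb : ℤ)) (2 * nb + 1) (T + nb - (2 * nb + 1) + 1)).rank
      = m * (2 * nb + 1))
    (u : ℤ → Fin m → ℝ) (y : ℤ → ℝ)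
    (hARX : ∀ t : ℤ, y t = -∑ j : Fin n, a j * y (t - 1 - (j.1 : ℤ))
      + ∑ j : Fin n, b j ⬝ᵥ u (t - 1 - (j.1 : ℤ)))
    (t : ℤ) :
    ∃ c : Fin T → ℝ, (JmatM nb T ud yd).mulVec c = Sum.elim (chiM nb u y t) (u t) := by
  classical
  set J := JmatM nb T ud yd with hJ
  set w := Sum.elim (chiM nb u y t) (u t) with hw
  have hcol : ∀ j : Fin T, (fun i => J i j) = Sum.elim (chiM nb ud yd (j.1 : ℤ)) (ud (j.1 : ℤ)) := by
    intro j; funext i; cases i <;> rfl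
  suffices hmem : w ∈ LinearMap.range J.mulVecLin by
    obtain ⟨c, hc⟩ := hmem
    exact ⟨c, by rw [← Matrix.mulVecLin_apply, hc]⟩
  by_contra hmem
  set U := LinearMap.range J.mulVecLin with hU
  have hq0 : U.mkQ w ≠ 0 := by
    rw [Submodule.mkQ_apply, Ne, Submodule.Quotient.mk_eq_zero]
    exact hmem
  obtain ⟨φ, hφ⟩ : ∃ φ : Module.Dual ℝ (_ ⧸ U), φ (U.mkQ w) ≠ 0 := by
    by_contra h
    push_neg at h
    exact hq0 ((Module.forall_dual_apply_eq_zero_iff ℝ _).mp h)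
  set f : (((Fin nb ⊕ Fin nb × Fin m) ⊕ Fin m) → ℝ) →ₗ[ℝ] ℝ := φ.comp U.mkQ with hf
  have hfw : f w ≠ 0 := hφ
  have hfU : ∀ v ∈ U, f v = 0 := by
    intro v hv
    have : U.mkQ v = 0 := by rw [Submodule.mkQ_apply, Submodule.Quotient.mk_eq_zero]; exact hv
    simp [hf, this]
  have hfcol : ∀ j : Fin T, f (fun i => J i j) = 0 := by
    intro j
    refine hfU _ ⟨Pi.single j 1, ?_⟩
    rw [Matrix.mulVecLin_apply]
    funext i
    rw [Matrix.mulVec, dotProduct_single, mul_one]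
  apply hfw
  -- expand f via coordinates
  set ξ : ((Fin nb ⊕ Fin nb × Fin m) ⊕ Fin m) → ℝ := fun c => f (Pi.single c 1) with hξ
  have hfv : ∀ v : ((Fin nb ⊕ Fin nb × Fin m) ⊕ Fin m) → ℝ, f v = ∑ c, v c * ξ c := by
    intro v
    have hv : v = ∑ c, (v c) • (Pi.single c (1 : ℝ) : ((Fin nb ⊕ Fin nb × Fin m) ⊕ Fin m) → ℝ) := by
      funext i
      rw [Finset.sum_apply]
      simp [Pi.single_apply]
    calc f v = f (∑ c, (v c) • (Pi.single c (1 : ℝ) : ((Fin nb ⊕ Fin nb × Fin m) ⊕ Fin m) → ℝ)) := by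
          rw [← hv]
    _ = ∑ c, v c * ξ c := by
          rw [map_sum]
          refine Finset.sum_congr rfl fun c _ => ?_
          rw [_root_.map_smul, smul_eq_mul]
  set p := pxi nb ξ with hp
  set q := qxi nb ξ with hq
  -- offline annihilation on the window
  have hwin : ∀ τ : ℤ, -(nb : ℤ) ≤ τ → τ ≤ (T : ℤ) - 1 - nb →
      papply p yd τ + ∑ r, papply (q r) (fun τ' => ud τ' r) τ = 0 := by
    intro τ h1 h2
    have hjlt : (τ + nb).toNat < T := by omega
    set j : Fin T := ⟨(τ + nb).toNat, hjlt⟩ with hj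
    have hjv : (j.1 : ℤ) = τ + nb := by simp [hj]; omega
    have h0 := hfcol j
    rw [hcol j, hfv, sum_elim_eval] at h0
    rw [hjv, show τ + (nb : ℤ) - nb = τ by ring] at h0
    exact h0
  -- the product polynomials annihilate ud on a window
  set F : Fin m → Polynomial ℝ := fun r => p * Bpol n b r + Apol n a * q r with hF
  have hFdeg : ∀ r, (F r).natDegree < 2 * nb + 1 := by
    intro r
    have hpd : p.natDegree ≤ nb := pxi_natDegree_le nb ξ
    have hqd : (q r).natDegree ≤ nb := qxi_natDegree_le nb ξ r
    have hBd : (Bpol n b r).natDegree ≤ n := Bpol_natDegree_le n b r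
    have hAd : (Apol n a).natDegree ≤ n := Apol_natDegree_le n a
    have h1 : (p * Bpol n b r).natDegree ≤ 2 * nb :=
      le_trans (Polynomial.natDegree_mul_le) (by omega)
    have h2 : (Apol n a * q r).natDegree ≤ 2 * nb :=
      le_trans (Polynomial.natDegree_mul_le) (by omega)
    have h3 : (F r).natDegree ≤ 2 * nb := by
      rw [hF]
      exact le_trans (Polynomial.natDegree_add_le _ _) (max_le h1 h2)
    omega
  have hFwin : ∀ τ : ℤ, -(nb : ℤ) ≤ τ → τ + nb + n ≤ (T : ℤ) - 1 →
      ∑ r, papply (F r) (fun τ' => ud τ' r) τ = 0 := by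
    intro τ h1 h2
    set s : ℤ → ℝ := fun τ' => papply p yd τ' + ∑ r, papply (q r) (fun τ'' => ud τ'' r) τ' with hs
    have hAs : ∀ w : ℤ, papply (Apol n a) s w = ∑ r, papply (F r) (fun z => ud z r) w := by
      intro w
      have hsfun : s = papply p yd + ∑ r : Fin m, papply (q r) (fun z => ud z r) := by
        funext z
        rw [hs]
        simp [Finset.sum_apply]
      rw [hsfun, papply_add_sig, papply_sum_sig, Pi.add_apply, Finset.sum_apply]
      simp only [hF, papply_add, papply_mul]
      rw [Finset.sum_add_distrib]
      have hApy : papply (Apol n a) (papply p yd) w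
          = ∑ r, papply p (papply (Bpol n b r) (fun z => ud z r)) w := by
        rw [← papply_mul, mul_comm (Apol n a) p, papply_mul]
        have harx : papply (Apol n a) yd
            = ∑ r : Fin m, papply (Bpol n b r) (fun z => ud z r) := by
          funext z
          rw [Finset.sum_apply]
          exact arx_poly n hn a b ud yd hARXd z
        rw [harx, papply_sum_sig, Finset.sum_apply]
      rw [hApy]
    have := hAs τ
    rw [← this]
    rw [papply_Apol]
    have hz : ∀ τ'' : ℤ, -(nb:ℤ) ≤ τ'' → τ'' ≤ (T:ℤ) - 1 - nb → s τ'' = 0 := fun τ'' a1 a2 => hwin τ'' a1 a2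
    rw [hz (τ + n) (by omega) (by omega)]
    rw [Finset.sum_congr rfl (fun j _ => by
      rw [hz (τ + n - 1 - j.1) (by have := j.2; omega) (by have := j.2; omega), mul_zero])]
    simp
  -- Hankel full row rank
  have hNcZ : ((T + nb - (2 * nb + 1) + 1 : ℕ) : ℤ) = (T : ℤ) - nb := by omega
  set H := HankelM ud (-(nb : ℤ)) (2 * nb + 1) (T + nb - (2 * nb + 1) + 1) with hH
  have hrange : LinearMap.range H.mulVecLin = ⊤ := by
    apply Submodule.eq_top_of_finrank_eq
    have h1 : Module.finrank ℝ (LinearMap.range H.mulVecLin) = H.rank := rfl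
    rw [h1, hPE, Module.finrank_fintype_fun_eq_card, Fintype.card_prod, Fintype.card_fin,
      Fintype.card_fin, mul_comm]
  have hsurj : ∀ x : Fin (2 * nb + 1) × Fin m → ℝ, ∃ c, H.mulVec c = x := by
    intro x
    have hx : x ∈ LinearMap.range H.mulVecLin := by rw [hrange]; trivial
    obtain ⟨c, hc⟩ := hx
    exact ⟨c, by rw [← Matrix.mulVecLin_apply, hc]⟩
  set v : Fin (2 * nb + 1) × Fin m → ℝ := fun pr => (F pr.2).coeff pr.1 with hvdef
  have hvM : Matrix.vecMul v H = 0 := by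
    funext j
    show ∑ i, v i * H i j = 0
    rw [Fintype.sum_prod_type, Finset.sum_comm]
    have hterm : ∀ rr : Fin m, (∑ k : Fin (2 * nb + 1), v (k, rr) * H (k, rr) j)
        = papply (F rr) (fun z => ud z rr) (-(nb : ℤ) + j.1) := by
      intro rr
      rw [papply_coeff_sum (hFdeg rr), ← Fin.sum_univ_eq_sum_range]
      refine Finset.sum_congr rfl fun k _ => ?_
      show (F rr).coeff k.1 * ud (-(nb : ℤ) + k.1 + j.1) rr
          = (F rr).coeff k.1 * ud ((-(nb : ℤ) + j.1) + k.1) rr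
      congr 2
      ring
    rw [Finset.sum_congr rfl fun rr _ => hterm rr]
    have hj := j.2
    refine hFwin (-(nb : ℤ) + j.1) (by omega) ?_
    omega
  have hcoeff : ∀ (r0 : Fin m) (k0 : Fin (2 * nb + 1)), (F r0).coeff k0.1 = 0 := by
    intro r0 k0
    obtain ⟨c, hc⟩ := hsurj (Pi.single (k0, r0) 1)
    have h1 : v ⬝ᵥ (H.mulVec c) = v (k0, r0) := by rw [hc, dotProduct_single, mul_one]
    rw [Matrix.dotProduct_mulVec, hvM, zero_dotProduct] at h1
    exact h1.symm
  have hF0' : ∀ r, p * Bpol n b r + Apol n a * q r = 0 := by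
    intro r
    have hF0 : F r = 0 := by
      ext k
      rw [Polynomial.coeff_zero]
      by_cases hk : k < 2 * nb + 1
      · exact hcoeff r ⟨k, hk⟩
      · exact Polynomial.coeff_eq_zero_of_natDegree_lt (lt_of_lt_of_le (hFdeg r) (by omega))
    simpa only [hF] using hF0
  have hdvd : ∀ r, Apol n a ∣ p * Bpol n b r := fun r =>
    ⟨-(q r), by linear_combination hF0' r⟩
  obtain ⟨g, hg⟩ := Apol_dvd_of_dvd_mul n hn a b hcop p hdvd
  have hqr : ∀ r, q r = -(g * Bpol n b r) := by
    intro r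
    have h5 : Apol n a * (g * Bpol n b r + q r) = 0 := by
      linear_combination hF0' r - Bpol n b r * hg
    rcases mul_eq_zero.mp h5 with h6 | h6
    · exact absurd h6 (Apol_ne_zero n hn a)
    · linear_combination h6
  -- conclude f w = 0
  rw [hfv w, hw, sum_elim_eval, ← hp, ← hq]
  have hgA : p = g * Apol n a := by rw [hg, mul_comm]
  have harxu : papply (Apol n a) y = ∑ r : Fin m, papply (Bpol n b r) (fun z => u z r) := by
    funext z
    rw [Finset.sum_apply]
    exact arx_poly n hn a b u y hARX z
  have e1 : papply p y (t - nb) = papply g (papply (Apol n a) y) (t - nb) := by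
    rw [hgA, papply_mul]
  have e2 : ∀ r, papply (q r) (fun z => u z r) (t - nb)
      = -(papply g (papply (Bpol n b r) (fun z => u z r)) (t - nb)) := fun r => by
    rw [hqr r, papply_neg, papply_mul]
  rw [e1]
  simp only [e2]
  rw [Finset.sum_neg_distrib]
  have e3 : ∑ r, papply g (papply (Bpol n b r) (fun z => u z r)) (t - nb)
      = papply g (papply (Apol n a) y) (t - nb) := by
    have e4 : (∑ r, papply g (papply (Bpol n b r) (fun z => u z r)) (t - nb))
        = (∑ r : Fin m, papply g (papply (Bpol n b r) (fun z => u z r))) (t - (nb : ℤ)) := by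
      rw [Finset.sum_apply]
    rw [e4, ← papply_sum_sig, ← harxu]
  rw [e3]
  ring
end DPC5
noncomputable section DPC6
open Polynomial Matrix

def Mmat (n nb m : ℕ) (a : Fin n → ℝ) (b : Fin n → Fin m → ℝ) :
    Matrix (Fin nb ⊕ Fin nb × Fin m) ((Fin nb ⊕ Fin nb × Fin m) ⊕ Fin m) ℝ :=
  Matrix.of fun i c =>
    match i with
    | Sum.inl k =>
      if h : (k.1 : ℕ) + 1 < nb then (if c = Sum.inl (Sum.inl ⟨k.1 + 1, h⟩) then 1 else 0)
      else
        match c with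
        | Sum.inl (Sum.inl k') => ∑ j : Fin n, if (k'.1 : ℕ) + 1 + j.1 = nb then -(a j) else 0
        | Sum.inl (Sum.inr (k', r)) => ∑ j : Fin n, if (k'.1 : ℕ) + 1 + j.1 = nb then b j r else 0
        | Sum.inr _ => 0
    | Sum.inr (k, r) =>
      if h : (k.1 : ℕ) + 1 < nb then (if c = Sum.inl (Sum.inr (⟨k.1 + 1, h⟩, r)) then 1 else 0)
      else (if c = Sum.inr r then 1 else 0)

lemma sum_indicator_eq {α : Type*} [Fintype α] [DecidableEq α] (c0 : α) (w : α → ℝ) :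
    ∑ c : α, (if c = c0 then (1 : ℝ) else 0) * w c = w c0 := by
  rw [Finset.sum_congr rfl (fun c _ => by rw [ite_mul, one_mul, zero_mul])]
  rw [Finset.sum_ite_eq' Finset.univ c0 w]
  simp

lemma sum_uniq_fin (n nb : ℕ) (hnb : n ≤ nb) (j : Fin n) (X : ℝ) :
    ∑ k' : Fin nb, (if (k'.1 : ℕ) + 1 + j.1 = nb then X else 0) = X := by
  have hj := j.2
  set k0 : Fin nb := ⟨nb - 1 - j.1, by omega⟩ with hk0
  have hiff : ∀ k' : Fin nb, ((k'.1 : ℕ) + 1 + j.1 = nb) ↔ (k' = k0) := by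
    intro k'
    constructor
    · intro hh; apply Fin.ext; simp [hk0]; omega
    · intro hh; rw [hh]; simp [hk0]; omega
  rw [Finset.sum_congr rfl (fun k' _ => by rw [if_congr (hiff k') rfl rfl])]
  rw [Finset.sum_ite_eq' Finset.univ k0 (fun _ => X)]
  simp

lemma Mmat_step (n nb m : ℕ) (hn : 1 ≤ n) (hnb : n ≤ nb) (a : Fin n → ℝ)
    (b : Fin n → Fin m → ℝ) (u : ℤ → Fin m → ℝ) (y : ℤ → ℝ)
    (hARX : ∀ t : ℤ, y t = -∑ j : Fin n, a j * y (t - 1 - (j.1 : ℤ))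
      + ∑ j : Fin n, b j ⬝ᵥ u (t - 1 - (j.1 : ℤ))) (t : ℤ) :
    (Mmat n nb m a b).mulVec (Sum.elim (chiM nb u y t) (u t)) = chiM nb u y (t + 1) := by
  classical
  funext i
  show ∑ c, Mmat n nb m a b i c * Sum.elim (chiM nb u y t) (u t) c = chiM nb u y (t + 1) i
  rcases i with k | ⟨k, r⟩
  · by_cases h : (k.1 : ℕ) + 1 < nb
    · have hrow : ∀ c, Mmat n nb m a b (Sum.inl k) c
          = (if c = Sum.inl (Sum.inl ⟨k.1 + 1, h⟩) then 1 else 0) := by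
        intro c; simp [Mmat, h]
      simp only [hrow]
      rw [sum_indicator_eq]
      simp only [Sum.elim_inl]
      show y (t - nb + (k.1 + 1 : ℕ)) = y (t + 1 - nb + k.1)
      congr 1
      push_cast
      ring
    · have hk : (k.1 : ℕ) = nb - 1 := by have := k.2; omega
      have hrow : ∀ c, Mmat n nb m a b (Sum.inl k) c
          = (match c with
            | Sum.inl (Sum.inl k') => ∑ j : Fin n, if (k'.1 : ℕ) + 1 + j.1 = nb then -(a j) else 0
            | Sum.inl (Sum.inr (k', r)) => ∑ j : Fin n, if (k'.1 : ℕ) + 1 + j.1 = nb then b j r else 0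
            | Sum.inr _ => (0 : ℝ)) := by
        intro c; simp [Mmat, h]
      simp only [hrow]
      rw [Fintype.sum_sum_type, Fintype.sum_sum_type, Fintype.sum_prod_type]
      simp only [Sum.elim_inl, Sum.elim_inr, mul_zero, Finset.sum_const_zero, add_zero]
      have hy : ∀ k' : Fin nb,
          (∑ j : Fin n, if (k'.1 : ℕ) + 1 + j.1 = nb then -(a j) else 0) * chiM nb u y t (Sum.inl k')
          = ∑ j : Fin n, if (k'.1 : ℕ) + 1 + j.1 = nb then -(a j) * y (t - 1 - j.1) else 0 := by
        intro k'
        rw [Finset.sum_mul]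
        refine Finset.sum_congr rfl fun j _ => ?_
        rw [ite_mul, zero_mul]
        by_cases hkj : (k'.1 : ℕ) + 1 + j.1 = nb
        · simp only [hkj, if_true]
          show -(a j) * y (t - nb + k'.1) = -(a j) * y (t - 1 - j.1)
          have harg : t - (nb : ℤ) + k'.1 = t - 1 - j.1 := by omega
          rw [harg]
        · simp [hkj]
      have hu : ∀ (k' : Fin nb) (r : Fin m),
          (∑ j : Fin n, if (k'.1 : ℕ) + 1 + j.1 = nb then b j r else 0) * chiM nb u y t (Sum.inr (k', r))
          = ∑ j : Fin n, if (k'.1 : ℕ) + 1 + j.1 = nb then b j r * u (t - 1 - j.1) r else 0 := by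
        intro k' r
        rw [Finset.sum_mul]
        refine Finset.sum_congr rfl fun j _ => ?_
        rw [ite_mul, zero_mul]
        by_cases hkj : (k'.1 : ℕ) + 1 + j.1 = nb
        · simp only [hkj, if_true]
          show b j r * u (t - nb + k'.1) r = b j r * u (t - 1 - j.1) r
          have harg : t - (nb : ℤ) + k'.1 = t - 1 - j.1 := by omega
          rw [harg]
        · simp [hkj]
      simp only [hy, hu]
      have h1 : (∑ k' : Fin nb, ∑ j : Fin n,
          if (k'.1 : ℕ) + 1 + j.1 = nb then -(a j) * y (t - 1 - j.1) else 0)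
          = ∑ j : Fin n, -(a j) * y (t - 1 - j.1) := by
        rw [Finset.sum_comm]
        exact Finset.sum_congr rfl fun j _ => sum_uniq_fin n nb hnb j _
      have h2 : (∑ k' : Fin nb, ∑ r : Fin m, ∑ j : Fin n,
          if (k'.1 : ℕ) + 1 + j.1 = nb then b j r * u (t - 1 - j.1) r else 0)
          = ∑ j : Fin n, ∑ r : Fin m, b j r * u (t - 1 - j.1) r := by
        rw [Finset.sum_comm]
        have : ∀ r : Fin m, (∑ k' : Fin nb, ∑ j : Fin n,
            if (k'.1 : ℕ) + 1 + j.1 = nb then b j r * u (t - 1 - j.1) r else 0)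
            = ∑ j : Fin n, b j r * u (t - 1 - j.1) r := by
          intro r
          rw [Finset.sum_comm]
          exact Finset.sum_congr rfl fun j _ => sum_uniq_fin n nb hnb j _
        rw [Finset.sum_congr rfl fun r _ => this r]
        rw [Finset.sum_comm]
      rw [h1, h2]
      show _ = y (t + 1 - nb + k.1)
      have harg : t + 1 - (nb : ℤ) + k.1 = t := by omega
      rw [harg, hARX t]
      simp only [dotProduct]
      have hneg : -∑ j : Fin n, a j * y (t - 1 - (j.1 : ℤ))
          = ∑ j : Fin n, -(a j) * y (t - 1 - (j.1 : ℤ)) := by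
        rw [← Finset.sum_neg_distrib]
        exact Finset.sum_congr rfl fun j _ => by ring
      rw [hneg]
      simp
  · by_cases h : (k.1 : ℕ) + 1 < nb
    · have hrow : ∀ c, Mmat n nb m a b (Sum.inr (k, r)) c
          = (if c = Sum.inl (Sum.inr (⟨k.1 + 1, h⟩, r)) then 1 else 0) := by
        intro c; simp [Mmat, h]
      simp only [hrow]
      rw [sum_indicator_eq]
      simp only [Sum.elim_inl]
      show u (t - nb + (k.1 + 1 : ℕ)) r = u (t + 1 - nb + k.1) r
      congr 1
      push_cast
      ring
    · have hk : (k.1 : ℕ) = nb - 1 := by have := k.2; omega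
      have hrow : ∀ c, Mmat n nb m a b (Sum.inr (k, r)) c
          = (if c = Sum.inr r then 1 else 0) := by
        intro c; simp [Mmat, h]
      simp only [hrow]
      rw [sum_indicator_eq]
      simp only [Sum.elim_inr]
      show u t r = u (t + 1 - nb + k.1) r
      have harg : t + 1 - (nb : ℤ) + k.1 = t := by omega
      rw [harg]
end DPC6

/-- Theorem 2 (per output channel): for a MISO channel
`y_i(t) = −∑ a_{i,j} y_i(t−j) + ∑ b_{i,j} u(t−j)` of order `ñ_i ≤ n̄` whose numerator
polynomials share no common divisor with the denominator, if the offline input is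
persistently exciting of order `2n̄+1` with `T ≥ 4n̄+1` data points, then the online
trajectory satisfies `χ̄_i(t+1) = X̄_{i,+} [X̄_{i,−}; U₋]† col(χ̄_i(t), u(t))` and
`y_i(t) = e_{n̄}ᵀ χ̄_i(t+1)`. -/
theorem stmt17 (n nb T m : ℕ) (hn : 1 ≤ n) (hnb : n ≤ nb) (hT : 4 * nb + 1 ≤ T)
    (a : Fin n → ℝ) (b : Fin n → Fin m → ℝ)
    (hcop : ∀ d : Polynomial ℝ,
      d ∣ ((X : Polynomial ℝ) ^ n + ∑ j : Fin n, C (a j) * X ^ (n - 1 - j.1)) →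
      (∀ r : Fin m, d ∣ ∑ j : Fin n, C (b j r) * X ^ (n - 1 - j.1)) → IsUnit d)
    (ud : ℤ → Fin m → ℝ) (yd : ℤ → ℝ)
    (hARXd : ∀ t : ℤ, yd t = -∑ j : Fin n, a j * yd (t - 1 - (j.1 : ℤ))
      + ∑ j : Fin n, b j ⬝ᵥ ud (t - 1 - (j.1 : ℤ)))
    (hPE : (HankelM ud (-(nb : ℤ)) (2 * nb + 1) (T + nb - (2 * nb + 1) + 1)).rank
      = m * (2 * nb + 1))
    (u : ℤ → Fin m → ℝ) (y : ℤ → ℝ)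
    (hARX : ∀ t : ℤ, y t = -∑ j : Fin n, a j * y (t - 1 - (j.1 : ℤ))
      + ∑ j : Fin n, b j ⬝ᵥ u (t - 1 - (j.1 : ℤ)))
    (Jd : Matrix (Fin T) ((Fin nb ⊕ Fin nb × Fin m) ⊕ Fin m) ℝ)
    (hJd : IsMoorePenrose (JmatM nb T ud yd) Jd) :
    ∀ t : ℤ,
      chiM nb u y (t + 1)
        = (XplusM nb T ud yd).mulVec
            (Jd.mulVec (Sum.elim (chiM nb u y t) (u t))) ∧
      y t = chiM nb u y (t + 1) (Sum.inl ⟨nb - 1, by omega⟩) := by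
  intro t
  have hcop' : ∀ d : Polynomial ℝ, d ∣ Apol n a → (∀ r : Fin m, d ∣ Bpol n b r) → IsUnit d :=
    fun d hd hb => hcop d hd hb
  constructor
  · obtain ⟨c, hc⟩ := keyB n nb T m hn hnb hT a b hcop' ud yd hARXd hPE u y hARX t
    have hcolJ : ∀ (j : Fin T) (cc : (Fin nb ⊕ Fin nb × Fin m) ⊕ Fin m),
        Sum.elim (chiM nb ud yd (j.1 : ℤ)) (ud (j.1 : ℤ)) cc = JmatM nb T ud yd cc j := by
      intro j cc; cases cc <;> rfl
    have hXplus : XplusM nb T ud yd = Mmat n nb m a b * JmatM nb T ud yd := by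
      ext i j
      rw [Matrix.mul_apply]
      calc XplusM nb T ud yd i j = chiM nb ud yd ((j.1 : ℤ) + 1) i := rfl
      _ = (Mmat n nb m a b).mulVec
            (Sum.elim (chiM nb ud yd (j.1 : ℤ)) (ud (j.1 : ℤ))) i :=
        (congrFun (Mmat_step n nb m hn hnb a b ud yd hARXd (j.1 : ℤ)) i).symm
      _ = ∑ cc, Mmat n nb m a b i cc
            * Sum.elim (chiM nb ud yd (j.1 : ℤ)) (ud (j.1 : ℤ)) cc := rfl
      _ = ∑ cc, Mmat n nb m a b i cc * JmatM nb T ud yd cc j :=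
        Finset.sum_congr rfl fun cc _ => by rw [hcolJ j cc]
    have hpen := hJd.1
    calc chiM nb u y (t + 1)
        = (Mmat n nb m a b).mulVec (Sum.elim (chiM nb u y t) (u t)) :=
          (Mmat_step n nb m hn hnb a b u y hARX t).symm
    _ = (Mmat n nb m a b).mulVec ((JmatM nb T ud yd).mulVec c) := by rw [hc]
    _ = (Mmat n nb m a b * JmatM nb T ud yd).mulVec c := by rw [Matrix.mulVec_mulVec]
    _ = (Mmat n nb m a b * (JmatM nb T ud yd * Jd * JmatM nb T ud yd)).mulVec c := by rw [hpen]
    _ = (Mmat n nb m a b * JmatM nb T ud yd).mulVec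
          (Jd.mulVec ((JmatM nb T ud yd).mulVec c)) := by
          simp only [Matrix.mulVec_mulVec, Matrix.mul_assoc]
    _ = (XplusM nb T ud yd).mulVec (Jd.mulVec (Sum.elim (chiM nb u y t) (u t))) := by
          rw [hc, hXplus]
  · show y t = y (t + 1 - nb + ((nb - 1 : ℕ) : ℤ))
    have harg : t + 1 - (nb : ℤ) + ((nb - 1 : ℕ) : ℤ) = t := by omega
    rw [harg]
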